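/- For every real number R with 0 ≤ R ≤ 1/2, the series identity ∑_{m=1}^{∞} sin²(2πmR)/m² = π² R(1 − 2R) holds. -/

import Mathlib

/-!
Since `sin² θ = (1 - cos 2θ) / 2`, the series is half the difference of `ζ(2) = π² / 6` and the
Fourier series `∑ cos (2πnx) / n² = π² B₂(x)` of the second Bernoulli polynomial, evaluated at
`x = 2R ∈ [0, 1]`.
-/

open Real

theorem hasSum_one_div_nat_sq_mul_cos {x : ℝ} (hx : x ∈ Set.Icc (0 : ℝ) 1) :
    HasSum (fun n : ℕ => 1 / (n : ℝ) ^ 2 * cos (2 * π * n * x)) (π ^ 2 * (x ^ 2 - x + 6⁻¹)) := by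
  have h := hasSum_one_div_nat_pow_mul_cos one_ne_zero hx
  rw [← bernoulliFun.eq_def, mul_one, bernoulliFun_two] at h
  convert h using 1
  push_cast [Nat.factorial_two]
  ring

theorem hasSum_sin_sq_div_sq {x : ℝ} (hx : x ∈ Set.Icc (0 : ℝ) (1 / 2)) :
    HasSum (fun n : ℕ => sin (2 * π * n * x) ^ 2 / (n : ℝ) ^ 2) (π ^ 2 * x * (1 - 2 * x)) := by
  have h2x : 2 * x ∈ Set.Icc (0 : ℝ) 1 := ⟨by linarith [hx.1], by linarith [hx.2]⟩
  have h := (hasSum_zeta_two.sub (hasSum_one_div_nat_sq_mul_cos h2x)).div_const 2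
  rw [show π ^ 2 * x * (1 - 2 * x) = (π ^ 2 / 6 - π ^ 2 * ((2 * x) ^ 2 - 2 * x + 6⁻¹)) / 2 by ring]
  refine h.congr_fun fun n => ?_
  rw [sin_sq_eq_half_sub, show 2 * (2 * π * n * x) = 2 * π * n * (2 * x) by ring]
  ring

/-- For every real `0 ≤ R ≤ 1/2`, `∑_{m=1}^∞ sin²(2πmR)/m² = π² R(1 − 2R)`. -/
theorem sum_sin_sq_div_sq (R : ℝ) (h0 : 0 ≤ R) (h1 : R ≤ 1 / 2) :
    ∑' m : ℕ, Real.sin (2 * Real.pi * (m + 1) * R) ^ 2 / ((m : ℝ) + 1) ^ 2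
      = Real.pi ^ 2 * R * (1 - 2 * R) := by
  have h := (hasSum_nat_add_iff' 1).mpr (hasSum_sin_sq_div_sq ⟨h0, h1⟩)
  simpa using h.tsum_eq
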